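/- Let m, n be positive integers, D, K real constants and σ ∈ {1, −1}. For every r > 0 with S(r) := √((1−Dr²)² − Kr⁴) satisfying (1−Dr²)² − Kr⁴ > 0 and 1 − Dr² + σ·S(r) > 0, define v(r) := r⁻²·(1 − Dr² + σ·S(r)). Then the function x ↦ √(v(x)) has derivative at r equal to −σ·(n/(√2·m))·r⁻²·h_II(r), where h_II(r) := (m/n)·√(2(1 − Dr² + σ·S(r)))/S(r). Consequently V_II(r) = G − σ/v(r) is of the form A₂(∫^r r'⁻²·h_II(r') dr' + B₂)^{-2} + G, i.e. V_II is (up to the additive constant G) an intrinsic harmonic oscillator potential of the type II Bertrand space. -/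

import Mathlib

/-!
Write `w = 1 - Dr² + σS`, so that `√v = √w / r` for `r > 0`. Since `S² = (1 - Dr²)² - Kr⁴` and
`σ² = 1`, the derivative `w'` satisfies `r w' S = 2 w (S - σ)`, which turns the logarithmic
derivative `w' / (2w) - 1/r` of `√v` into `-σ / (r S)`; this is the derivative formula, and it
says that `√v + σ c F` with `c = n / (√2 m)` has zero derivative. On an interval `√v` is therefore
an affine function of the primitive `F`, i.e. `v = c² (F + B₂)²`, and `G - σ/v` has the oscillator
form with `A₂ = -σ / c²`.
-/

open Real

/-- Square root factor `S(r) = √((1-Dr²)² - Kr⁴)` of a type II Bertrand space. -/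
noncomputable def typeII_S (D K x : ℝ) : ℝ :=
  Real.sqrt ((1 - D * x ^ 2) ^ 2 - K * x ^ 4)

/-- Transformed radial variable `v(r) = r⁻²(1 - Dr² + σS(r))` of a type II Bertrand space. -/
noncomputable def typeII_v (D K σ x : ℝ) : ℝ :=
  (x ^ 2)⁻¹ * (1 - D * x ^ 2 + σ * typeII_S D K x)

/-- Radial metric coefficient `h_II(r) = (m/n)√(2(1-Dr²+σS(r)))/S(r)` of a type II
Bertrand space. -/
noncomputable def typeII_h (m n : ℕ) (D K σ x : ℝ) : ℝ :=
  (m : ℝ) / (n : ℝ) * Real.sqrt (2 * (1 - D * x ^ 2 + σ * typeII_S D K x)) / typeII_S D K x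

open Filter Topology

theorem IsOpen.exists_eq_add_of_hasDerivAt {𝕜 G : Type*} [RCLike 𝕜] [NormedAddCommGroup G]
    [NormedSpace 𝕜 G] {s : Set 𝕜} {f g : 𝕜 → G} {f' : 𝕜 → G} (hs : IsOpen s)
    (hs' : IsPreconnected s) (hf : ∀ x ∈ s, HasDerivAt f (f' x) x)
    (hg : ∀ x ∈ s, HasDerivAt g (f' x) x) : ∃ a, s.EqOn f (g · + a) :=
  hs.exists_eq_add_of_deriv_eq hs' (fun x hx => (hf x hx).differentiableAt.differentiableWithinAt)
    (fun x hx => (hg x hx).differentiableAt.differentiableWithinAt)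
    fun x hx => (hf x hx).deriv.trans (hg x hx).deriv.symm

theorem sub_div_eq_of_sqrt_eq {v F a c σ G : ℝ} (hσ : σ ^ 2 = 1) (hc : c ≠ 0) (hv : 0 ≤ v)
    (h : √v = -σ * c * F + a) :
    G - σ / v = -σ * (c ^ 2)⁻¹ * ((F + -(σ * a / c)) ^ 2)⁻¹ + G := by
  have hv' : v = c ^ 2 * (F + -(σ * a / c)) ^ 2 := by
    rw [← sq_sqrt hv, h]
    field_simp
    linear_combination (c ^ 2 * F ^ 2 - a ^ 2) * hσ
  rw [hv', div_eq_mul_inv, mul_inv]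
  ring

section

variable {D K σ r : ℝ}

theorem hasDerivAt_typeII_S (hQ : 0 < (1 - D * r ^ 2) ^ 2 - K * r ^ 4) :
    HasDerivAt (typeII_S D K)
      (-2 * r * (D * (1 - D * r ^ 2) + K * r ^ 2) / typeII_S D K r) r := by
  have hQ' : HasDerivAt (fun x : ℝ => (1 - D * x ^ 2) ^ 2 - K * x ^ 4)
      (-4 * r * (D * (1 - D * r ^ 2) + K * r ^ 2)) r := by
    refine ((((hasDerivAt_pow 2 r).const_mul D).const_sub 1).fun_pow 2).fun_sub
      ((hasDerivAt_pow 4 r).const_mul K) |>.congr_deriv ?_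
    push_cast
    ring
  exact (hQ'.sqrt hQ.ne').congr_deriv (by unfold typeII_S; ring)

theorem typeII_numerator_deriv_identity {S : ℝ} (hσ : σ ^ 2 = 1)
    (hS : S ^ 2 = (1 - D * r ^ 2) ^ 2 - K * r ^ 4) :
    r * (-(2 * D * r * S) - 2 * σ * r * (D * (1 - D * r ^ 2) + K * r ^ 2)) =
      2 * (1 - D * r ^ 2 + σ * S) * (S - σ) := by
  linear_combination 2 * S * hσ - 2 * σ * hS

theorem sqrt_typeII_v_eventuallyEq (hr : 0 < r) :
    (fun x => √(typeII_v D K σ x)) =ᶠ[𝓝 r]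
      fun x => √(1 - D * x ^ 2 + σ * typeII_S D K x) / x := by
  filter_upwards [eventually_gt_nhds hr] with x hx
  rw [typeII_v, sqrt_mul (by positivity), sqrt_inv, sqrt_sq hx.le, inv_mul_eq_div]

theorem hasDerivAt_sqrt_typeII_v {m n : ℕ} (hm : m ≠ 0) (hn : n ≠ 0) (hσ : σ ^ 2 = 1)
    (hr : 0 < r) (hQ : 0 < (1 - D * r ^ 2) ^ 2 - K * r ^ 4)
    (hw : 0 < 1 - D * r ^ 2 + σ * typeII_S D K r) :
    HasDerivAt (fun x => √(typeII_v D K σ x))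
      (-σ * (n / (√2 * m)) * (r ^ 2)⁻¹ * typeII_h m n D K σ r) r := by
  have hS0 : typeII_S D K r ≠ 0 := (sqrt_pos.mpr hQ).ne'
  have hw' := (((hasDerivAt_pow 2 r).const_mul D).const_sub 1).fun_add
    ((hasDerivAt_typeII_S hQ).const_mul σ)
  refine ((hw'.sqrt hw.ne').div (hasDerivAt_id r) hr.ne').congr_of_eventuallyEq
    (sqrt_typeII_v_eventuallyEq hr) |>.congr_deriv ?_
  have hnum := typeII_numerator_deriv_identity (S := typeII_S D K r) hσ (sq_sqrt hQ.le)
  have hu := sq_sqrt hw.le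
  rw [typeII_h, sqrt_mul zero_le_two]
  simp only [id]
  field_simp
  rw [hu]
  linear_combination hnum

end

/-- The type II Bertrand potential `V_II(r) = G - σ/v(r)` is (up to the additive
constant `G`) an intrinsic harmonic oscillator potential of the type II Bertrand space:
`x ↦ √(v(x))` has derivative `-σ (n/(√2 m)) r⁻² h_II(r)`, and consequently `V_II` is of
the form `A₂(∫ r⁻² h_II + B₂)⁻² + G`. -/
theorem typeII_potential_is_intrinsic_oscillator
    (m n : ℕ) (hm : 0 < m) (hn : 0 < n) (D K G σ : ℝ) (hσ : σ = 1 ∨ σ = -1) :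
    (∀ r : ℝ, 0 < r → 0 < (1 - D * r ^ 2) ^ 2 - K * r ^ 4 →
      0 < 1 - D * r ^ 2 + σ * typeII_S D K r →
      HasDerivAt (fun x : ℝ => Real.sqrt (typeII_v D K σ x))
        (-σ * ((n : ℝ) / (Real.sqrt 2 * (m : ℝ))) * (r ^ 2)⁻¹ * typeII_h m n D K σ r) r) ∧
    ∀ (F : ℝ → ℝ) (I : Set ℝ), IsOpen I → I.OrdConnected →
      (∀ x ∈ I, 0 < x ∧ 0 < (1 - D * x ^ 2) ^ 2 - K * x ^ 4 ∧
        0 < 1 - D * x ^ 2 + σ * typeII_S D K x) →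
      (∀ x ∈ I, HasDerivAt F ((x ^ 2)⁻¹ * typeII_h m n D K σ x) x) →
      ∃ A₂ B₂ : ℝ, A₂ ≠ 0 ∧ ∀ x ∈ I,
        G - σ / typeII_v D K σ x = A₂ * ((F x + B₂) ^ 2)⁻¹ + G := by
  have hσ2 : σ ^ 2 = 1 := by rcases hσ with rfl | rfl <;> norm_num
  have hderiv := fun r => hasDerivAt_sqrt_typeII_v (D := D) (K := K) hm.ne' hn.ne' hσ2 (r := r)
  refine ⟨hderiv, fun F I hI hIc hpos hF => ?_⟩
  set c : ℝ := n / (√2 * m)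
  have hc : c ≠ 0 := by positivity
  obtain ⟨a, ha⟩ := hI.exists_eq_add_of_hasDerivAt hIc.isPreconnected
    (fun x hx => hderiv x (hpos x hx).1 (hpos x hx).2.1 (hpos x hx).2.2)
    (fun x hx => ((hF x hx).const_mul (-σ * c)).congr_deriv (mul_assoc _ _ _).symm)
  refine ⟨-σ * (c ^ 2)⁻¹, -(σ * a / c), by rcases hσ with rfl | rfl <;> simpa using hc, ?_⟩
  intro x hx
  obtain ⟨hx0, -, hw⟩ := hpos x hx
  exact sub_div_eq_of_sqrt_eq hσ2 hc (by rw [typeII_v]; positivity) (ha hx)
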